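/- arXiv:1207.1893 — 2 statements merged into one kernel-verified Lean document; each statement's English description precedes it below -/
import Mathlib

section
/- (Minimal dwell-time.) Let T > 0 and let A, J be real n×n matrices. Suppose there exists a real symmetric positive definite n×n matrix P such that AᵀP + PA is negative definite and ℐ(P,A,J,T) is negative definite. Then ℐ(P,A,J,s) is negative definite for every s ≥ T, and consequently for every sequence (T_k)_{k∈ℕ} of reals with T_k ≥ T for all k and every x₀ ∈ ℝⁿ, the sequence defined by x_{k+1} = exp(T_k·A)·J·x_k, x_0 = x₀, tends to 0 as k → ∞. -/
open Matrix Filter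

/-- Matrix exponential of a real square matrix. -/
noncomputable def mexp {n : ℕ} (A : Matrix (Fin n) (Fin n) ℝ) : Matrix (Fin n) (Fin n) ℝ :=
  NormedSpace.exp A

/-- ℐ(P,A,J,T) := Jᵀ·exp(T·Aᵀ)·P·exp(T·A)·J − P. -/
noncomputable def scrI {n : ℕ} (P A J : Matrix (Fin n) (Fin n) ℝ) (T : ℝ) :
    Matrix (Fin n) (Fin n) ℝ :=
  Jᵀ * mexp (T • Aᵀ) * P * mexp (T • A) * J - P

/-- xᵀMx < 0 for all x ≠ 0. -/
def negDef {m : Type*} [Fintype m] (M : Matrix m m ℝ) : Prop :=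
  ∀ x : m → ℝ, x ≠ 0 → x ⬝ᵥ M.mulVec x < 0

/-- xᵀMx > 0 for all x ≠ 0. -/
def posDef {m : Type*} [Fintype m] (M : Matrix m m ℝ) : Prop :=
  ∀ x : m → ℝ, x ≠ 0 → 0 < x ⬝ᵥ M.mulVec x

/-- xᵀMx ≥ 0 for all x. -/
def posSemidef {m : Type*} [Fintype m] (M : Matrix m m ℝ) : Prop :=
  ∀ x : m → ℝ, 0 ≤ x ⬝ᵥ M.mulVec x


/-!
For fixed `y`, the derivative of `t ↦ (e^{tA} y)ᵀ P (e^{tA} y)` is the quadratic form of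
`AᵀP + PA` at `e^{tA} y`, so this map is nonincreasing. Since `xᵀ ℐ(P,A,J,s) x` is its value at
`y = Jx`, `t = s`, minus `xᵀPx`, negativity of `ℐ` passes from `T` to every `s ≥ T`.
Along the trajectory `V x = xᵀPx` satisfies `V x_{k+1} ≤ x_kᵀ (ℐ(P,A,J,T) + P) x_k`. Compactness
of the unit sphere gives `ℐ(P,A,J,T) ≤ -ε P` for some `ε > 0`, so `V x_k ≤ (1 - ε)^k V x_0`, and
`V ≥ c ‖·‖²` forces `x_k → 0`.
-/

open Metric

lemma mexp_smul_transpose {n : ℕ} (A : Matrix (Fin n) (Fin n) ℝ) (t : ℝ) :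
    mexp (t • Aᵀ) = (mexp (t • A))ᵀ := by
  rw [← transpose_smul]
  exact Matrix.exp_transpose _

section
attribute [local instance] Matrix.linftyOpNormedRing Matrix.linftyOpNormedAlgebra

lemma hasDerivAt_dotProduct_mexp_mul_mexp_mulVec {n : ℕ} (P A : Matrix (Fin n) (Fin n) ℝ)
    (y : Fin n → ℝ) (t : ℝ) :
    HasDerivAt (fun s => y ⬝ᵥ (mexp (s • Aᵀ) * P * mexp (s • A)) *ᵥ y)
      (y ⬝ᵥ (mexp (t • Aᵀ) * (Aᵀ * P + P * A) * mexp (t • A)) *ᵥ y) t := by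
  have hmat : HasDerivAt (fun s => mexp (s • Aᵀ) * P * mexp (s • A))
      (mexp (t • Aᵀ) * (Aᵀ * P + P * A) * mexp (t • A)) t := by
    refine (((hasDerivAt_exp_smul_const Aᵀ t).mul_const P).mul
      (hasDerivAt_exp_smul_const' A t)).congr_deriv ?_
    simp only [mexp, Matrix.mul_add, Matrix.add_mul, Matrix.mul_assoc]
    -- the two sides differ only in the ring structure (`linftyOp` vs. default) behind `*`
    rfl
  let ev : Matrix (Fin n) (Fin n) ℝ →L[ℝ] ℝ := LinearMap.toContinuousLinearMap
    { toFun := fun M => y ⬝ᵥ M *ᵥ y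
      map_add' := fun M N => by simp only [add_mulVec, dotProduct_add]
      map_smul' := fun c M => by simp only [smul_mulVec, dotProduct_smul, RingHom.id_apply] }
  exact ev.hasFDerivAt.comp_hasDerivAt t hmat

end

lemma dotProduct_transpose_mul_mul_mulVec {m : Type*} [Fintype m] (P M : Matrix m m ℝ)
    (x : m → ℝ) : x ⬝ᵥ (Mᵀ * P * M) *ᵥ x = (M *ᵥ x) ⬝ᵥ P *ᵥ (M *ᵥ x) := by
  rw [Matrix.mul_assoc, ← mulVec_mulVec, dotProduct_mulVec, vecMul_transpose, ← mulVec_mulVec]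

lemma dotProduct_mulVec_nonpos_of_negDef {m : Type*} [Fintype m] {M : Matrix m m ℝ}
    (hM : negDef M) (x : m → ℝ) : x ⬝ᵥ M *ᵥ x ≤ 0 := by
  rcases eq_or_ne x 0 with rfl | hx
  · simp
  · exact (hM x hx).le

lemma dotProduct_mexp_mulVec_eq {n : ℕ} (M A : Matrix (Fin n) (Fin n) ℝ) (t : ℝ)
    (y : Fin n → ℝ) :
    (mexp (t • A) *ᵥ y) ⬝ᵥ M *ᵥ (mexp (t • A) *ᵥ y)
      = y ⬝ᵥ (mexp (t • Aᵀ) * M * mexp (t • A)) *ᵥ y := by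
  rw [mexp_smul_transpose, dotProduct_transpose_mul_mul_mulVec]

lemma antitone_dotProduct_mexp_mulVec {n : ℕ} {P A : Matrix (Fin n) (Fin n) ℝ}
    (hC : negDef (Aᵀ * P + P * A)) (y : Fin n → ℝ) :
    Antitone fun t : ℝ => (mexp (t • A) *ᵥ y) ⬝ᵥ P *ᵥ (mexp (t • A) *ᵥ y) := by
  have hderiv (t : ℝ) : HasDerivAt (fun s : ℝ => (mexp (s • A) *ᵥ y) ⬝ᵥ P *ᵥ (mexp (s • A) *ᵥ y))
      ((mexp (t • A) *ᵥ y) ⬝ᵥ (Aᵀ * P + P * A) *ᵥ (mexp (t • A) *ᵥ y)) t := by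
    simpa only [dotProduct_mexp_mulVec_eq] using hasDerivAt_dotProduct_mexp_mul_mexp_mulVec P A y t
  refine antitone_of_deriv_nonpos (fun t => (hderiv t).differentiableAt) fun t => ?_
  rw [(hderiv t).deriv]
  exact dotProduct_mulVec_nonpos_of_negDef hC _

lemma dotProduct_scrI_mulVec {n : ℕ} (P A J : Matrix (Fin n) (Fin n) ℝ) (s : ℝ)
    (x : Fin n → ℝ) :
    x ⬝ᵥ scrI P A J s *ᵥ x
      = (mexp (s • A) *ᵥ (J *ᵥ x)) ⬝ᵥ P *ᵥ (mexp (s • A) *ᵥ (J *ᵥ x)) - x ⬝ᵥ P *ᵥ x := by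
  rw [scrI, sub_mulVec, dotProduct_sub, dotProduct_mexp_mulVec_eq,
    ← dotProduct_transpose_mul_mul_mulVec]
  simp only [Matrix.mul_assoc]

lemma negDef_scrI_of_le {n : ℕ} {P A J : Matrix (Fin n) (Fin n) ℝ} {T s : ℝ}
    (hC : negDef (Aᵀ * P + P * A)) (hI : negDef (scrI P A J T)) (hTs : T ≤ s) :
    negDef (scrI P A J s) := fun x hx => by
  have hdecr := antitone_dotProduct_mexp_mulVec hC (J *ᵥ x) hTs
  have hneg := hI x hx
  rw [dotProduct_scrI_mulVec] at hneg ⊢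
  linarith

/-- The ratio `f / g` attains a negative maximum `-ε` on the compact unit sphere; homogeneity
spreads the bound to the whole space. -/
lemma exists_pos_forall_le_neg_mul {E : Type*} [NormedAddCommGroup E] [NormedSpace ℝ E]
    [ProperSpace E] {f g : E → ℝ} (hf : Continuous f) (hg : Continuous g)
    (hf_smul : ∀ (c : ℝ) x, f (c • x) = c ^ 2 * f x)
    (hg_smul : ∀ (c : ℝ) x, g (c • x) = c ^ 2 * g x)
    (hf_neg : ∀ x ≠ 0, f x < 0) (hg_pos : ∀ x ≠ 0, 0 < g x) :
    ∃ ε > 0, ∀ x, f x ≤ -ε * g x := by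
  have hf0 : f 0 = 0 := by simpa using hf_smul 0 0
  have hg0 : g 0 = 0 := by simpa using hg_smul 0 0
  rcases subsingleton_or_nontrivial E with hE | hE
  · exact ⟨1, one_pos, fun x => by simp [Subsingleton.elim x 0, hf0, hg0]⟩
  have hg_sphere : ∀ u ∈ sphere (0 : E) 1, g u ≠ 0 := fun u hu =>
    (hg_pos u (ne_zero_of_mem_unit_sphere ⟨u, hu⟩)).ne'
  obtain ⟨u₀, hu₀, hmax⟩ := (isCompact_sphere (0 : E) 1).exists_isMaxOn
    (NormedSpace.sphere_nonempty.mpr zero_le_one) (hf.continuousOn.div hg.continuousOn hg_sphere)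
  have hu₀0 : u₀ ≠ 0 := ne_zero_of_mem_unit_sphere ⟨u₀, hu₀⟩
  refine ⟨-(f u₀ / g u₀), neg_pos.2 (div_neg_of_neg_of_pos (hf_neg u₀ hu₀0) (hg_pos u₀ hu₀0)),
    fun x => ?_⟩
  rcases eq_or_ne x 0 with rfl | hx
  · simp [hf0, hg0]
  set u := ‖x‖⁻¹ • x
  have hu : u ∈ sphere (0 : E) 1 := by simpa [u] using norm_smul_inv_norm (𝕜 := ℝ) hx
  have hxu : x = ‖x‖ • u := by simp [u, smul_smul, mul_inv_cancel₀ (norm_ne_zero_iff.2 hx)]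
  have hfu : f u ≤ f u₀ / g u₀ * g u :=
    (div_le_iff₀ (hg_pos u (ne_zero_of_mem_unit_sphere ⟨u, hu⟩))).1 (hmax hu)
  rw [hxu, hf_smul, hg_smul, neg_neg]
  calc ‖x‖ ^ 2 * f u ≤ ‖x‖ ^ 2 * (f u₀ / g u₀ * g u) := by gcongr
    _ = f u₀ / g u₀ * (‖x‖ ^ 2 * g u) := by ring

section QuadraticForm

variable {m : Type*} [Fintype m]

lemma smul_dotProduct_mulVec_smul (M : Matrix m m ℝ) (c : ℝ) (x : m → ℝ) :
    (c • x) ⬝ᵥ M *ᵥ (c • x) = c ^ 2 * (x ⬝ᵥ M *ᵥ x) := by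
  rw [mulVec_smul, smul_dotProduct, dotProduct_smul, smul_eq_mul, smul_eq_mul]
  ring

lemma exists_pos_forall_dotProduct_mulVec_le_neg_mul {P Q : Matrix m m ℝ} (hQ : negDef Q)
    (hP : posDef P) : ∃ ε > 0, ∀ x, x ⬝ᵥ Q *ᵥ x ≤ -ε * (x ⬝ᵥ P *ᵥ x) :=
  exists_pos_forall_le_neg_mul (by fun_prop) (by fun_prop) (smul_dotProduct_mulVec_smul Q)
    (smul_dotProduct_mulVec_smul P) hQ hP

lemma exists_pos_forall_mul_sq_norm_le {P : Matrix m m ℝ} (hP : posDef P) :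
    ∃ ε > 0, ∀ x, ε * ‖x‖ ^ 2 ≤ x ⬝ᵥ P *ᵥ x := by
  obtain ⟨ε, hε, h⟩ := exists_pos_forall_le_neg_mul (f := fun x => -(x ⬝ᵥ P *ᵥ x))
    (g := fun x : m → ℝ => ‖x‖ ^ 2) (by fun_prop) (by fun_prop)
    (fun c x => by rw [smul_dotProduct_mulVec_smul]; ring)
    (fun c x => by rw [norm_smul, mul_pow, Real.norm_eq_abs, sq_abs])
    (fun x hx => neg_neg_of_pos (hP x hx)) (fun x hx => by positivity)
  exact ⟨ε, hε, fun x => by linarith [h x]⟩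

lemma tendsto_zero_of_dotProduct_mulVec_le_mul {P : Matrix m m ℝ} (hP : posDef P) {ρ : ℝ}
    (hρ : ρ < 1) {x : ℕ → m → ℝ}
    (hx : ∀ k, x (k + 1) ⬝ᵥ P *ᵥ x (k + 1) ≤ ρ * (x k ⬝ᵥ P *ᵥ x k)) :
    Tendsto x atTop (nhds 0) := by
  obtain ⟨ε, hε, hcoer⟩ := exists_pos_forall_mul_sq_norm_le hP
  set V := fun k => x k ⬝ᵥ P *ᵥ x k
  have hV_nonneg (k : ℕ) : 0 ≤ V k := le_trans (by positivity) (hcoer (x k))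
  set r := max ρ 0
  have hV_geom (k : ℕ) : V k ≤ r ^ k * V 0 := le_geom (le_max_right ρ 0) k fun j _ =>
    (hx j).trans (mul_le_mul_of_nonneg_right (le_max_left ρ 0) (hV_nonneg j))
  have hbound (k : ℕ) : ‖x k‖ ^ 2 ≤ r ^ k * V 0 / ε := by
    rw [le_div_iff₀ hε]
    linarith [hcoer (x k), hV_geom k]
  have hlim : Tendsto (fun k => r ^ k * V 0 / ε) atTop (nhds 0) := by
    simpa using ((tendsto_pow_atTop_nhds_zero_of_lt_one (le_max_right ρ 0)
      (max_lt hρ one_pos)).mul_const (V 0)).div_const ε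
  have hsq := (squeeze_zero (fun k => sq_nonneg ‖x k‖) hbound hlim).sqrt
  simp only [Real.sqrt_sq (norm_nonneg _), Real.sqrt_zero] at hsq
  exact tendsto_zero_iff_norm_tendsto_zero.2 hsq

end QuadraticForm

theorem stmt2_general {n : ℕ} (T : ℝ) (A J : Matrix (Fin n) (Fin n) ℝ)
    (P : Matrix (Fin n) (Fin n) ℝ) (hP : posDef P)
    (hC : negDef (Aᵀ * P + P * A)) (hI : negDef (scrI P A J T)) :
    (∀ s : ℝ, T ≤ s → negDef (scrI P A J s)) ∧
    (∀ Tk : ℕ → ℝ, (∀ k, T ≤ Tk k) →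
      ∀ x₀ : Fin n → ℝ, ∀ x : ℕ → Fin n → ℝ, x 0 = x₀ →
        (∀ k, x (k + 1) = (mexp (Tk k • A) * J).mulVec (x k)) →
        Tendsto x atTop (nhds 0)) := by
  refine ⟨fun s hs => negDef_scrI_of_le hC hI hs, fun Tk hTk _ x _ hx => ?_⟩
  obtain ⟨ε, hε, hIP⟩ := exists_pos_forall_dotProduct_mulVec_le_neg_mul hI hP
  refine tendsto_zero_of_dotProduct_mulVec_le_mul hP (ρ := 1 - ε) (by linarith) fun k => ?_
  calc x (k + 1) ⬝ᵥ P *ᵥ x (k + 1)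
      ≤ (mexp (T • A) *ᵥ (J *ᵥ x k)) ⬝ᵥ P *ᵥ (mexp (T • A) *ᵥ (J *ᵥ x k)) := by
        rw [hx k, ← mulVec_mulVec]
        exact antitone_dotProduct_mexp_mulVec hC _ (hTk k)
    _ = x k ⬝ᵥ scrI P A J T *ᵥ x k + x k ⬝ᵥ P *ᵥ x k := by
        rw [dotProduct_scrI_mulVec]; ring
    _ ≤ (1 - ε) * (x k ⬝ᵥ P *ᵥ x k) := by linarith [hIP (x k)]

/-- Minimal dwell-time: if `P ≻ 0` is symmetric with `AᵀP + PA ≺ 0` and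
`ℐ(P,A,J,T) ≺ 0`, then `ℐ(P,A,J,s) ≺ 0` for all `s ≥ T`, and every impulsive trajectory with
dwell-times `T_k ≥ T` tends to `0`. -/
theorem stmt2 {n : ℕ} (T : ℝ) (hT : 0 < T) (A J : Matrix (Fin n) (Fin n) ℝ)
    (P : Matrix (Fin n) (Fin n) ℝ) (hPsym : P.IsSymm) (hP : posDef P)
    (hC : negDef (Aᵀ * P + P * A)) (hI : negDef (scrI P A J T)) :
    (∀ s : ℝ, T ≤ s → negDef (scrI P A J s)) ∧
    (∀ Tk : ℕ → ℝ, (∀ k, T ≤ Tk k) →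
      ∀ x₀ : Fin n → ℝ, ∀ x : ℕ → Fin n → ℝ, x 0 = x₀ →
        (∀ k, x (k + 1) = (mexp (Tk k • A) * J).mulVec (x k)) →
        Tendsto x atTop (nhds 0)) :=
  stmt2_general T A J P hP hC hI
end

section
/- (Minimal dwell-time, affine conditions.) Let T > 0 and let A, J be real n×n matrices. Suppose there exist real symmetric positive definite n×n matrices P and Z, real symmetric n×n matrices Q and U, a real n×n matrix R, and a real n×2n matrix N such that Ψ(T) is negative definite, Φ(T) is negative definite, and AᵀP + PA is negative definite. Then ℐ(P,A,J,s) is negative definite for every s ≥ T, and consequently for every sequence (T_k)_{k∈ℕ} of reals with T_k ≥ T for all k and every x₀ ∈ ℝⁿ, the sequence defined by x_{k+1} = exp(T_k·A)·J·x_k, x_0 = x₀, tends to 0 as k → ∞. -/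
open Matrix Filter

/-- The n×2n block matrix `[I 0]`. -/
def Mxb (n : ℕ) : Matrix (Fin n) (Fin n ⊕ Fin n) ℝ := Matrix.fromCols 1 0

/-- The n×2n block matrix `[0 I]`. -/
def Mmb (n : ℕ) : Matrix (Fin n) (Fin n ⊕ Fin n) ℝ := Matrix.fromCols 0 1

/-- The n×2n block matrix `[I −J]`. -/
def Mzb {n : ℕ} (J : Matrix (Fin n) (Fin n) ℝ) : Matrix (Fin n) (Fin n ⊕ Fin n) ℝ :=
  Matrix.fromCols 1 (-J)

/-- He[X] := X + Xᵀ. -/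
def He {m : Type*} (X : Matrix m m ℝ) : Matrix m m ℝ := X + Xᵀ

/-- The 2n×2n matrix `F₀`. -/
def F0 {n : ℕ} (T : ℝ) (A J P Q R : Matrix (Fin n) (Fin n) ℝ)
    (N : Matrix (Fin n) (Fin n ⊕ Fin n) ℝ) :
    Matrix (Fin n ⊕ Fin n) (Fin n ⊕ Fin n) ℝ :=
  T • ((Mxb n)ᵀ * (Aᵀ * P + P * A) * Mxb n) - (Mzb J)ᵀ * Q * Mzb J
    + (Mmb n)ᵀ * (Jᵀ * P * J - P) * Mmb n
    + He (Nᵀ * Mzb J - (Mzb J)ᵀ * R * Mxb n)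

/-- The 2n×2n matrix `F₂`. -/
def F2 {n : ℕ} (A J Q R Z : Matrix (Fin n) (Fin n) ℝ) :
    Matrix (Fin n ⊕ Fin n) (Fin n ⊕ Fin n) ℝ :=
  He ((Mxb n)ᵀ * Aᵀ * Q * Mzb J + (Mxb n)ᵀ * Aᵀ * R * Mxb n + (Mzb J)ᵀ * R * A * Mxb n)
    + (Mxb n)ᵀ * Aᵀ * Z * A * Mxb n

/-- The 2n×2n matrix `F₃`. -/
def F3 {n : ℕ} (J U : Matrix (Fin n) (Fin n) ℝ) :
    Matrix (Fin n ⊕ Fin n) (Fin n ⊕ Fin n) ℝ :=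
  (Mmb n)ᵀ * Jᵀ * U * J * Mmb n

/-- The 2n×2n matrix `Ψ(T) = F₀ + T·(F₂ + F₃)`. -/
def Psi {n : ℕ} (T : ℝ) (A J P Z Q U R : Matrix (Fin n) (Fin n) ℝ)
    (N : Matrix (Fin n) (Fin n ⊕ Fin n) ℝ) :
    Matrix (Fin n ⊕ Fin n) (Fin n ⊕ Fin n) ℝ :=
  F0 T A J P Q R N + T • (F2 A J Q R Z + F3 J U)

/-- The 3n×3n block matrix `Φ(T) = [[F₀ − T·F₃, Nᵀ],[N, −Z/T]]`. -/
noncomputable def Phi {n : ℕ} (T : ℝ) (A J P Z Q U R : Matrix (Fin n) (Fin n) ℝ)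
    (N : Matrix (Fin n) (Fin n ⊕ Fin n) ℝ) :
    Matrix ((Fin n ⊕ Fin n) ⊕ Fin n) ((Fin n ⊕ Fin n) ⊕ Fin n) ℝ :=
  Matrix.fromBlocks (F0 T A J P Q R N - T • F3 J U) Nᵀ N (-(T⁻¹ • Z))

/-!
Looped-functional argument. Write `V y = yᵀ P y`, and for `v ≠ 0` let `x θ = exp(θA) J v` be the
flow started at the post-jump state, `z = x θ - J v` and `ζ = (x θ, v)`. The functional
`g θ = T V(x θ) + θ (V(J v) - V v) + (T - θ) (zᵀQz + 2 zᵀR x θ + ∫₀^θ ẋᵀZẋ) + θ (T - θ) (Jv)ᵀU(Jv)`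
has `g 0 = T V(J v)` and `g T = T V(x T) + T (V(J v) - V v)`, so `g T < g 0` is exactly
`vᵀ ℐ(P,A,J,T) v < 0`. On `(0, T)` one has
`T θ g' θ = (T - θ) θ ζᵀΨζ + [Φ-form at (θ ζ, -T z)] + T (zᵀZz - θ ∫₀^θ ẋᵀZẋ)`,
and the last term is `≤ 0` by Jensen's inequality since `z = ∫₀^θ ẋ`; hence `g` is strictly
decreasing. As `AᵀP + PA ≺ 0`, `V` decreases along the flow, which gives `ℐ(s) ≺ 0` for `s ≥ T`
and `V x_{k+1} ≤ V x_k - ε ‖x_k‖²` (compactness of the unit sphere), so `∑ ‖x_k‖² < ∞`.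
-/

section QuadraticForms
variable {m : Type*} [Fintype m]

lemma quad_add (X Y : Matrix m m ℝ) (x : m → ℝ) :
    x ⬝ᵥ (X + Y) *ᵥ x = x ⬝ᵥ X *ᵥ x + x ⬝ᵥ Y *ᵥ x := by
  rw [add_mulVec, dotProduct_add]

lemma quad_sub (X Y : Matrix m m ℝ) (x : m → ℝ) :
    x ⬝ᵥ (X - Y) *ᵥ x = x ⬝ᵥ X *ᵥ x - x ⬝ᵥ Y *ᵥ x := by
  rw [sub_mulVec, dotProduct_sub]

lemma quad_smul (c : ℝ) (X : Matrix m m ℝ) (x : m → ℝ) :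
    x ⬝ᵥ (c • X) *ᵥ x = c * (x ⬝ᵥ X *ᵥ x) := by
  rw [smul_mulVec, dotProduct_smul, smul_eq_mul]

lemma quad_He (X : Matrix m m ℝ) (x : m → ℝ) : x ⬝ᵥ He X *ᵥ x = 2 * (x ⬝ᵥ X *ᵥ x) := by
  rw [He, quad_add, dotProduct_mulVec x Xᵀ, vecMul_transpose, dotProduct_comm]
  ring

lemma posSemidef_of_posDef {M : Matrix m m ℝ} (hM : posDef M) : posSemidef M := by
  intro x
  rcases eq_or_ne x 0 with rfl | hx
  · simp
  · exact (hM x hx).le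

lemma quad_nonpos_of_negDef {M : Matrix m m ℝ} (hM : negDef M) (x : m → ℝ) :
    x ⬝ᵥ M *ᵥ x ≤ 0 := by
  rcases eq_or_ne x 0 with rfl | hx
  · simp
  · exact (hM x hx).le

lemma exists_quad_le_neg_mul_norm_sq_of_negDef {M : Matrix m m ℝ} (hM : negDef M) :
    ∃ ε > 0, ∀ x : m → ℝ, x ⬝ᵥ M *ᵥ x ≤ -(ε * ‖x‖ ^ 2) := by
  have hcont : Continuous fun x : m → ℝ => x ⬝ᵥ M *ᵥ x := by fun_prop
  have hsphere : ∀ x : m → ℝ, x ≠ 0 → ‖x‖⁻¹ • x ∈ Metric.sphere (0 : m → ℝ) 1 := by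
    intro x hx
    simp [norm_smul, inv_mul_cancel₀ (norm_ne_zero_iff.2 hx)]
  rcases (Metric.sphere (0 : m → ℝ) 1).eq_empty_or_nonempty with hempty | hne
  · refine ⟨1, one_pos, fun x => ?_⟩
    obtain rfl : x = 0 := by
      by_contra hx
      simpa [hempty] using hsphere x hx
    simp
  obtain ⟨y, hy, hmax⟩ := (isCompact_sphere (0 : m → ℝ) 1).exists_isMaxOn hne hcont.continuousOn
  have hy0 : y ≠ 0 := by rintro rfl; simp at hy
  refine ⟨-(y ⬝ᵥ M *ᵥ y), neg_pos.2 (hM y hy0), fun x => ?_⟩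
  rcases eq_or_ne x 0 with rfl | hx
  · simp
  have h : (‖x‖⁻¹ • x) ⬝ᵥ M *ᵥ (‖x‖⁻¹ • x) ≤ y ⬝ᵥ M *ᵥ y := hmax (hsphere x hx)
  have hx2 : 0 < ‖x‖ ^ 2 := by positivity
  simp only [smul_dotProduct, mulVec_smul, dotProduct_smul, smul_eq_mul] at h
  have hscale : ‖x‖ ^ 2 * (‖x‖⁻¹ * (‖x‖⁻¹ * (x ⬝ᵥ M *ᵥ x))) = x ⬝ᵥ M *ᵥ x := by
    field_simp
  linarith [mul_le_mul_of_nonneg_left h hx2.le]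

lemma dotProduct_transpose_mulVec' {l : Type*} [Fintype l] (M : Matrix m l ℝ)
    (x : l → ℝ) (y : m → ℝ) : x ⬝ᵥ Mᵀ *ᵥ y = (M *ᵥ x) ⬝ᵥ y := by
  rw [dotProduct_mulVec, vecMul_transpose, dotProduct_comm]

lemma Matrix.IsSymm.dotProduct_mulVec_comm {M : Matrix m m ℝ}
    (hM : M.IsSymm) (a b : m → ℝ) : a ⬝ᵥ M *ᵥ b = b ⬝ᵥ M *ᵥ a := by
  rw [dotProduct_mulVec, ← mulVec_transpose, hM, dotProduct_comm]

lemma quad_integral_le_mul_integral_quad {Z : Matrix m m ℝ}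
    (hZ : posSemidef Z) {f : ℝ → m → ℝ} (hf : Continuous f) {a b : ℝ} (hab : a ≤ b) :
    (∫ s in a..b, f s) ⬝ᵥ Z *ᵥ (∫ s in a..b, f s) ≤ (b - a) * ∫ s in a..b, f s ⬝ᵥ Z *ᵥ f s := by
  classical
  set u := ∫ s in a..b, f s
  have hint := hf.intervalIntegrable (μ := MeasureTheory.volume) a b
  have hleft : ∫ s in a..b, u ⬝ᵥ Z *ᵥ f s = u ⬝ᵥ Z *ᵥ u := by
    simpa [Matrix.toBilin'_apply'] using
      (LinearMap.toContinuousLinearMap (Matrix.toBilin' Z u)).intervalIntegral_comp_comm hint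
  have hright : ∫ s in a..b, f s ⬝ᵥ Z *ᵥ u = u ⬝ᵥ Z *ᵥ u := by
    simpa [Matrix.toBilin'_apply'] using
      (LinearMap.toContinuousLinearMap ((Matrix.toBilin' Z).flip u)).intervalIntegral_comp_comm hint
  have hnonneg : 0 ≤ ∫ s in a..b, ((b - a) • f s - u) ⬝ᵥ Z *ᵥ ((b - a) • f s - u) :=
    intervalIntegral.integral_nonneg hab fun s _ => hZ _
  have hexpand : ∀ s, ((b - a) • f s - u) ⬝ᵥ Z *ᵥ ((b - a) • f s - u)
      = (b - a) ^ 2 * (f s ⬝ᵥ Z *ᵥ f s) - (b - a) * (u ⬝ᵥ Z *ᵥ f s)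
        - (b - a) * (f s ⬝ᵥ Z *ᵥ u) + u ⬝ᵥ Z *ᵥ u := by
    intro s
    simp only [mulVec_sub, mulVec_smul, dotProduct_sub, sub_dotProduct, dotProduct_smul,
      smul_dotProduct, smul_eq_mul]
    ring
  simp_rw [hexpand] at hnonneg
  rw [intervalIntegral.integral_add, intervalIntegral.integral_sub, intervalIntegral.integral_sub,
    intervalIntegral.integral_const_mul, intervalIntegral.integral_const_mul,
    intervalIntegral.integral_const_mul, hleft, hright, intervalIntegral.integral_const,
    smul_eq_mul] at hnonneg
  all_goals try exact Continuous.intervalIntegrable (by fun_prop) _ _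
  rcases hab.eq_or_lt with rfl | hlt
  · simp [u]
  · nlinarith

end QuadraticForms

lemma tendsto_zero_of_lyapunov_decrease {E : Type*} [SeminormedAddCommGroup E] {V : E → ℝ}
    (hV : ∀ x, 0 ≤ V x) {ε : ℝ} (hε : 0 < ε) {x : ℕ → E}
    (hstep : ∀ k, V (x (k + 1)) + ε * ‖x k‖ ^ 2 ≤ V (x k)) : Tendsto x atTop (nhds 0) := by
  have hsum : ∀ K, ∑ k ∈ Finset.range K, ε * ‖x k‖ ^ 2 ≤ V (x 0) := by
    intro K
    have htele : ∑ k ∈ Finset.range K, ε * ‖x k‖ ^ 2 + V (x K) ≤ V (x 0) := by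
      induction K with
      | zero => simp
      | succ K ih => rw [Finset.sum_range_succ]; linarith [hstep K]
    linarith [hV (x K)]
  have hsq : Tendsto (fun k => ‖x k‖ ^ 2) atTop (nhds 0) := by
    have hsummable := summable_of_sum_range_le (fun k => by positivity) hsum
    simpa [hε.ne'] using hsummable.tendsto_atTop_zero.div_const ε
  rw [tendsto_zero_iff_norm_tendsto_zero]
  simpa using hsq.sqrt

section BlockForms
variable {n : ℕ} (T : ℝ) (A J P Q R U Z : Matrix (Fin n) (Fin n) ℝ)
  (N : Matrix (Fin n) (Fin n ⊕ Fin n) ℝ) (a b : Fin n → ℝ)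

@[simp] lemma Mxb_mulVec : Mxb n *ᵥ Sum.elim a b = a := by
  simp [Mxb]

@[simp] lemma Mmb_mulVec : Mmb n *ᵥ Sum.elim a b = b := by
  simp [Mmb]

@[simp] lemma Mzb_mulVec : Mzb J *ᵥ Sum.elim a b = a - J *ᵥ b := by
  simp [Mzb, neg_mulVec, sub_eq_add_neg]

lemma quad_F0 :
    Sum.elim a b ⬝ᵥ F0 T A J P Q R N *ᵥ Sum.elim a b =
      T * ((A *ᵥ a) ⬝ᵥ P *ᵥ a + a ⬝ᵥ P *ᵥ (A *ᵥ a)) - (a - J *ᵥ b) ⬝ᵥ Q *ᵥ (a - J *ᵥ b)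
        + ((J *ᵥ b) ⬝ᵥ P *ᵥ (J *ᵥ b) - b ⬝ᵥ P *ᵥ b)
        + 2 * ((N *ᵥ Sum.elim a b) ⬝ᵥ (a - J *ᵥ b) - (a - J *ᵥ b) ⬝ᵥ R *ᵥ a) := by
  simp only [F0, quad_sub, quad_smul, quad_He, ← mulVec_mulVec,
    dotProduct_transpose_mulVec', Mxb_mulVec, Mmb_mulVec, Mzb_mulVec, add_mulVec, dotProduct_add]

lemma quad_F2 :
    Sum.elim a b ⬝ᵥ F2 A J Q R Z *ᵥ Sum.elim a b =
      2 * ((A *ᵥ a) ⬝ᵥ Q *ᵥ (a - J *ᵥ b) + (A *ᵥ a) ⬝ᵥ R *ᵥ a + (a - J *ᵥ b) ⬝ᵥ R *ᵥ (A *ᵥ a))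
        + (A *ᵥ a) ⬝ᵥ Z *ᵥ (A *ᵥ a) := by
  simp only [F2, quad_add, quad_He, ← mulVec_mulVec, dotProduct_transpose_mulVec',
    Mxb_mulVec, Mzb_mulVec]

lemma quad_F3 : Sum.elim a b ⬝ᵥ F3 J U *ᵥ Sum.elim a b = (J *ᵥ b) ⬝ᵥ U *ᵥ (J *ᵥ b) := by
  simp only [F3, ← mulVec_mulVec, dotProduct_transpose_mulVec', Mmb_mulVec]

lemma quad_Psi (ζ : Fin n ⊕ Fin n → ℝ) :
    ζ ⬝ᵥ Psi T A J P Z Q U R N *ᵥ ζ = ζ ⬝ᵥ F0 T A J P Q R N *ᵥ ζ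
      + T * (ζ ⬝ᵥ F2 A J Q R Z *ᵥ ζ + ζ ⬝ᵥ F3 J U *ᵥ ζ) := by
  rw [Psi, quad_add, quad_smul, quad_add]

lemma quad_Phi (ζ : Fin n ⊕ Fin n → ℝ) (w : Fin n → ℝ) :
    Sum.elim ζ w ⬝ᵥ Phi T A J P Z Q U R N *ᵥ Sum.elim ζ w = ζ ⬝ᵥ F0 T A J P Q R N *ᵥ ζ
      - T * (ζ ⬝ᵥ F3 J U *ᵥ ζ) + 2 * ((N *ᵥ ζ) ⬝ᵥ w) - T⁻¹ * (w ⬝ᵥ Z *ᵥ w) := by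
  simp only [Phi, fromBlocks_mulVec, Sum.elim_comp_inl, Sum.elim_comp_inr,
    sumElim_dotProduct_sumElim, dotProduct_add, dotProduct_transpose_mulVec', quad_sub,
    neg_mulVec, smul_mulVec, dotProduct_neg, dotProduct_smul, smul_eq_mul]
  rw [dotProduct_comm w]
  ring

end BlockForms

section Flow
variable {n : ℕ}

noncomputable def flow (A : Matrix (Fin n) (Fin n) ℝ) (w : Fin n → ℝ) (t : ℝ) : Fin n → ℝ :=
  mexp (t • A) *ᵥ w

@[simp] lemma flow_zero (A : Matrix (Fin n) (Fin n) ℝ) (w : Fin n → ℝ) : flow A w 0 = w := by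
  simp [flow, mexp]

section
attribute [local instance] Matrix.linftyOpNormedRing Matrix.linftyOpNormedAlgebra

lemma hasDerivAt_flow (A : Matrix (Fin n) (Fin n) ℝ) (w : Fin n → ℝ) (t : ℝ) :
    HasDerivAt (flow A w) (A *ᵥ flow A w t) t := by
  have hexp : HasDerivAt (fun s : ℝ => mexp (s • A)) (mexp (t • A) * A) t :=
    hasDerivAt_exp_smul_const A t
  have hcomm : mexp (t • A) * A = A * mexp (t • A) :=
    (((Commute.refl A).smul_left t).exp_left).eq
  let L : Matrix (Fin n) (Fin n) ℝ →L[ℝ] (Fin n → ℝ) :=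
    ((mulVecBilin ℝ ℝ).flip w).toContinuousLinearMap
  have happly : HasDerivAt (flow A w) ((mexp (t • A) * A) *ᵥ w) t :=
    L.hasFDerivAt.comp_hasDerivAt t hexp
  rwa [hcomm, ← mulVec_mulVec] at happly

end

lemma continuous_flow (A : Matrix (Fin n) (Fin n) ℝ) (w : Fin n → ℝ) : Continuous (flow A w) :=
  continuous_iff_continuousAt.2 fun t => (hasDerivAt_flow A w t).continuousAt

lemma hasDerivAt_dotProduct_mulVec {a b : ℝ → Fin n → ℝ} {a' b' : Fin n → ℝ} {t : ℝ}
    (M : Matrix (Fin n) (Fin n) ℝ) (ha : HasDerivAt a a' t) (hb : HasDerivAt b b' t) :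
    HasDerivAt (fun s => a s ⬝ᵥ M *ᵥ b s) (a' ⬝ᵥ M *ᵥ b t + a t ⬝ᵥ M *ᵥ b') t := by
  have hMb : ∀ i, HasDerivAt (fun s => (M *ᵥ b s) i) ((M *ᵥ b') i) t := fun i => by
    simpa only [mulVec, dotProduct] using
      HasDerivAt.fun_sum fun j _ => (hasDerivAt_pi.1 hb j).const_mul (M i j)
  simpa only [dotProduct, Finset.sum_add_distrib] using
    HasDerivAt.fun_sum fun i _ => (hasDerivAt_pi.1 ha i).fun_mul (hMb i)

lemma antitone_quad_flow {A P : Matrix (Fin n) (Fin n) ℝ} (hC : negDef (Aᵀ * P + P * A))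
    (w : Fin n → ℝ) : Antitone fun t => flow A w t ⬝ᵥ P *ᵥ flow A w t := by
  have hderiv : ∀ t, HasDerivAt (fun t => flow A w t ⬝ᵥ P *ᵥ flow A w t)
      (flow A w t ⬝ᵥ (Aᵀ * P + P * A) *ᵥ flow A w t) t := fun t => by
    convert hasDerivAt_dotProduct_mulVec P (hasDerivAt_flow A w t) (hasDerivAt_flow A w t)
      using 1
    rw [add_mulVec, dotProduct_add, ← mulVec_mulVec, ← mulVec_mulVec,
      dotProduct_transpose_mulVec']
  exact antitone_of_deriv_nonpos (fun t => (hderiv t).differentiableAt)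
    fun t => (hderiv t).deriv ▸ quad_nonpos_of_negDef hC _

lemma quad_scrI (P A J : Matrix (Fin n) (Fin n) ℝ) (s : ℝ) (v : Fin n → ℝ) :
    v ⬝ᵥ scrI P A J s *ᵥ v = flow A (J *ᵥ v) s ⬝ᵥ P *ᵥ flow A (J *ᵥ v) s - v ⬝ᵥ P *ᵥ v := by
  have htranspose : mexp (s • Aᵀ) = (mexp (s • A))ᵀ := by
    rw [mexp, mexp, ← transpose_smul, Matrix.exp_transpose]
  rw [scrI, quad_sub, htranspose, ← transpose_mul]
  simp only [← mulVec_mulVec, dotProduct_transpose_mulVec', flow]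

end Flow

section LoopedFunctional
variable {n : ℕ} (T : ℝ) (A J P Q R U Z : Matrix (Fin n) (Fin n) ℝ) (v : Fin n → ℝ)

noncomputable def loopedFunctional (θ : ℝ) : ℝ :=
  T * (flow A (J *ᵥ v) θ ⬝ᵥ P *ᵥ flow A (J *ᵥ v) θ)
    + θ * ((J *ᵥ v) ⬝ᵥ P *ᵥ (J *ᵥ v) - v ⬝ᵥ P *ᵥ v)
    + (T - θ) * ((flow A (J *ᵥ v) θ - J *ᵥ v) ⬝ᵥ Q *ᵥ (flow A (J *ᵥ v) θ - J *ᵥ v)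
        + 2 * ((flow A (J *ᵥ v) θ - J *ᵥ v) ⬝ᵥ R *ᵥ flow A (J *ᵥ v) θ)
        + ∫ s in 0..θ, (A *ᵥ flow A (J *ᵥ v) s) ⬝ᵥ Z *ᵥ (A *ᵥ flow A (J *ᵥ v) s))
    + θ * (T - θ) * ((J *ᵥ v) ⬝ᵥ U *ᵥ (J *ᵥ v))

lemma loopedFunctional_zero :
    loopedFunctional T A J P Q R U Z v 0 = T * ((J *ᵥ v) ⬝ᵥ P *ᵥ (J *ᵥ v)) := by
  simp [loopedFunctional]

lemma loopedFunctional_self : loopedFunctional T A J P Q R U Z v T =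
    T * (flow A (J *ᵥ v) T ⬝ᵥ P *ᵥ flow A (J *ᵥ v) T)
      + T * ((J *ᵥ v) ⬝ᵥ P *ᵥ (J *ᵥ v) - v ⬝ᵥ P *ᵥ v) := by
  simp [loopedFunctional]

lemma hasDerivAt_loopedFunctional (hQ : Q.IsSymm) (N : Matrix (Fin n) (Fin n ⊕ Fin n) ℝ)
    (θ : ℝ) : HasDerivAt (loopedFunctional T A J P Q R U Z v)
      (Sum.elim (flow A (J *ᵥ v) θ) v ⬝ᵥ F0 T A J P Q R N *ᵥ Sum.elim (flow A (J *ᵥ v) θ) v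
        - 2 * ((N *ᵥ Sum.elim (flow A (J *ᵥ v) θ) v) ⬝ᵥ (flow A (J *ᵥ v) θ - J *ᵥ v))
        - (∫ s in 0..θ, (A *ᵥ flow A (J *ᵥ v) s) ⬝ᵥ Z *ᵥ (A *ᵥ flow A (J *ᵥ v) s))
        + (T - θ) * (Sum.elim (flow A (J *ᵥ v) θ) v ⬝ᵥ F2 A J Q R Z *ᵥ
            Sum.elim (flow A (J *ᵥ v) θ) v)
        + (T - 2 * θ) * (Sum.elim (flow A (J *ᵥ v) θ) v ⬝ᵥ F3 J U *ᵥ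
            Sum.elim (flow A (J *ᵥ v) θ) v)) θ := by
  set x := flow A (J *ᵥ v)
  have hx : HasDerivAt x (A *ᵥ x θ) θ := hasDerivAt_flow A _ θ
  have hz : HasDerivAt (fun s => x s - J *ᵥ v) (A *ᵥ x θ) θ := hx.sub_const _
  have hI : HasDerivAt (fun r => ∫ s in 0..r, (A *ᵥ x s) ⬝ᵥ Z *ᵥ (A *ᵥ x s))
      ((A *ᵥ x θ) ⬝ᵥ Z *ᵥ (A *ᵥ x θ)) θ := by
    have hcont : Continuous fun s => (A *ᵥ x s) ⬝ᵥ Z *ᵥ (A *ᵥ x s) := by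
      have := continuous_flow A (J *ᵥ v)
      fun_prop
    exact intervalIntegral.integral_hasDerivAt_right (hcont.intervalIntegrable _ _)
      hcont.stronglyMeasurable.stronglyMeasurableAtFilter hcont.continuousAt
  have hθ : HasDerivAt (fun s : ℝ => T - s) (-1) θ := by
    simpa using (hasDerivAt_id θ).const_sub T
  have h := (((hasDerivAt_dotProduct_mulVec P hx hx).const_mul T).add
    ((hasDerivAt_id θ).mul_const ((J *ᵥ v) ⬝ᵥ P *ᵥ (J *ᵥ v) - v ⬝ᵥ P *ᵥ v))).add
    (hθ.mul (((hasDerivAt_dotProduct_mulVec Q hz hz).add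
      ((hasDerivAt_dotProduct_mulVec R hz hx).const_mul 2)).add hI)) |>.add
    (((hasDerivAt_id θ).mul hθ).mul_const ((J *ᵥ v) ⬝ᵥ U *ᵥ (J *ᵥ v)))
  refine h.congr_deriv ?_
  rw [quad_F0, quad_F2, quad_F3, Matrix.IsSymm.dotProduct_mulVec_comm hQ (x θ - J *ᵥ v)]
  simp only [Pi.add_apply, id]
  ring

end LoopedFunctional

section Dwell
variable {n : ℕ} {T : ℝ} {A J P Q R U Z : Matrix (Fin n) (Fin n) ℝ}
  {N : Matrix (Fin n) (Fin n ⊕ Fin n) ℝ} {v : Fin n → ℝ}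

lemma strictAntiOn_loopedFunctional (hT : 0 < T) (hZ : posSemidef Z) (hQ : Q.IsSymm)
    (hPsi : negDef (Psi T A J P Z Q U R N)) (hPhi : negDef (Phi T A J P Z Q U R N))
    (hv : v ≠ 0) : StrictAntiOn (loopedFunctional T A J P Q R U Z v) (Set.Icc 0 T) := by
  have hderiv := hasDerivAt_loopedFunctional T A J P Q R U Z v hQ N
  refine strictAntiOn_of_deriv_neg (convex_Icc 0 T)
    (fun θ _ => (hderiv θ).continuousAt.continuousWithinAt) fun θ hθ => ?_
  rw [interior_Icc] at hθ
  obtain ⟨hθ0, hθT⟩ := hθ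
  rw [(hderiv θ).deriv]
  set x := flow A (J *ᵥ v)
  set ζ := Sum.elim (x θ) v
  set z := x θ - J *ᵥ v
  set I := ∫ s in 0..θ, (A *ᵥ x s) ⬝ᵥ Z *ᵥ (A *ᵥ x s)
  have hζ : ζ ≠ 0 := fun h => hv (funext fun i => congrFun h (Sum.inr i))
  have hjensen : z ⬝ᵥ Z *ᵥ z ≤ θ * I := by
    have hcont : Continuous fun s => A *ᵥ x s := by
      have := continuous_flow A (J *ᵥ v)
      fun_prop
    have hz : ∫ s in 0..θ, A *ᵥ x s = z := by
      rw [intervalIntegral.integral_eq_sub_of_hasDerivAt (fun s _ => hasDerivAt_flow A _ s)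
        (hcont.intervalIntegrable _ _), flow_zero]
    have h := quad_integral_le_mul_integral_quad hZ hcont hθ0.le
    rwa [hz, sub_zero] at h
  have hΨ : (T - θ) * θ * (ζ ⬝ᵥ Psi T A J P Z Q U R N *ᵥ ζ) ≤ 0 :=
    mul_nonpos_of_nonneg_of_nonpos (mul_nonneg (sub_nonneg.2 hθT.le) hθ0.le)
      (quad_nonpos_of_negDef hPsi ζ)
  -- Testing `Φ` on `(θ ζ, -T z)` absorbs the cross term `N ζ ⬝ᵥ z` into `zᵀ Z z`.
  have hΦ := hPhi (Sum.elim (θ • ζ) (-(T • z))) fun h => smul_ne_zero hθ0.ne' hζ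
    (funext fun i => congrFun h (Sum.inl i))
  rw [quad_Phi] at hΦ
  simp only [smul_dotProduct, mulVec_smul, dotProduct_smul, mulVec_neg, dotProduct_neg,
    neg_dotProduct, smul_eq_mul] at hΦ
  rw [quad_Psi] at hΨ
  have hTθ : 0 < T * θ := mul_pos hT hθ0
  refine neg_of_mul_neg_right (a := T * θ) ?_ hTθ.le
  have hT' : T⁻¹ * (T * (T * (z ⬝ᵥ Z *ᵥ z))) = T * (z ⬝ᵥ Z *ᵥ z) := by field_simp
  linarith [mul_le_mul_of_nonneg_left hjensen hT.le]

lemma negDef_scrI (hT : 0 < T) (hZ : posSemidef Z) (hQ : Q.IsSymm)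
    (hPsi : negDef (Psi T A J P Z Q U R N)) (hPhi : negDef (Phi T A J P Z Q U R N)) :
    negDef (scrI P A J T) := by
  intro v hv
  have h := strictAntiOn_loopedFunctional hT hZ hQ hPsi hPhi hv
    (Set.left_mem_Icc.2 hT.le) (Set.right_mem_Icc.2 hT.le) hT
  rw [loopedFunctional_zero, loopedFunctional_self] at h
  rw [quad_scrI]
  exact neg_of_mul_neg_right (a := T) (by linarith) hT.le

end Dwell

theorem stmt8_general {n : ℕ} (T : ℝ) (hT : 0 < T) (A J : Matrix (Fin n) (Fin n) ℝ)
    (P Z Q U R : Matrix (Fin n) (Fin n) ℝ) (N : Matrix (Fin n) (Fin n ⊕ Fin n) ℝ)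
    (hP : posDef P) (hZ : posDef Z)
    (hQsym : Q.IsSymm)
    (hPsi : negDef (Psi T A J P Z Q U R N))
    (hPhi : negDef (Phi T A J P Z Q U R N))
    (hC : negDef (Aᵀ * P + P * A)) :
    (∀ s : ℝ, T ≤ s → negDef (scrI P A J s)) ∧
    (∀ Tk : ℕ → ℝ, (∀ k, T ≤ Tk k) →
      ∀ x₀ : Fin n → ℝ, ∀ x : ℕ → Fin n → ℝ, x 0 = x₀ →
        (∀ k, x (k + 1) = (mexp (Tk k • A) * J).mulVec (x k)) →
        Tendsto x atTop (nhds 0)) := by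
  have hI := negDef_scrI hT (posSemidef_of_posDef hZ) hQsym hPsi hPhi
  have hmono : ∀ s, T ≤ s → ∀ v, v ⬝ᵥ scrI P A J s *ᵥ v ≤ v ⬝ᵥ scrI P A J T *ᵥ v := by
    intro s hs v
    rw [quad_scrI, quad_scrI]
    linarith [antitone_quad_flow hC (J *ᵥ v) hs]
  refine ⟨fun s hs v hv => (hmono s hs v).trans_lt (hI v hv), ?_⟩
  intro Tk hTk x₀ x _ hx
  obtain ⟨ε, hε, hbound⟩ := exists_quad_le_neg_mul_norm_sq_of_negDef hI
  refine tendsto_zero_of_lyapunov_decrease (posSemidef_of_posDef hP) hε fun k => ?_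
  have h := (hmono (Tk k) (hTk k) (x k)).trans (hbound (x k))
  have hxk : x (k + 1) = flow A (J *ᵥ x k) (Tk k) := by rw [hx k, flow, mulVec_mulVec]
  rw [quad_scrI] at h
  rw [hxk]
  linarith

/-- Minimal dwell-time, affine conditions: if `Ψ(T) ≺ 0`, `Φ(T) ≺ 0` and
`AᵀP + PA ≺ 0`, then `ℐ(P,A,J,s) ≺ 0` for all `s ≥ T`, and every impulsive trajectory with
dwell-times `T_k ≥ T` tends to `0`. -/
theorem stmt8 {n : ℕ} (T : ℝ) (hT : 0 < T) (A J : Matrix (Fin n) (Fin n) ℝ)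
    (P Z Q U R : Matrix (Fin n) (Fin n) ℝ) (N : Matrix (Fin n) (Fin n ⊕ Fin n) ℝ)
    (hPsym : P.IsSymm) (hP : posDef P) (hZsym : Z.IsSymm) (hZ : posDef Z)
    (hQsym : Q.IsSymm) (hUsym : U.IsSymm)
    (hPsi : negDef (Psi T A J P Z Q U R N))
    (hPhi : negDef (Phi T A J P Z Q U R N))
    (hC : negDef (Aᵀ * P + P * A)) :
    (∀ s : ℝ, T ≤ s → negDef (scrI P A J s)) ∧
    (∀ Tk : ℕ → ℝ, (∀ k, T ≤ Tk k) →
      ∀ x₀ : Fin n → ℝ, ∀ x : ℕ → Fin n → ℝ, x 0 = x₀ →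
        (∀ k, x (k + 1) = (mexp (Tk k • A) * J).mulVec (x k)) →
        Tendsto x atTop (nhds 0)) :=
  stmt8_general T hT A J P Z Q U R N hP hZ hQsym hPsi hPhi hC
end
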